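/- arXiv:2209.02286 — 4 statements merged into one kernel-verified Lean document; each statement's English description precedes it below -/
import Mathlib

section
/- Let p ≥ 1, r > 0 and s > −1/p be real numbers. There exists a constant C > 0, depending only on p, r, s, such that for every continuously differentiable function f : [0,r] → ℂ: (∫₀^r x^{ps} |f(x)|^p dx)^{1/p} ≤ C ( |f(r)| + (∫₀^r x^{p(s+1)} |f'(x)|^p dx)^{1/p} ). -/
/-!
Dominate `‖f‖` by the majorant `F x = ‖f r‖ + ∫ t in x..r, ‖f' t‖`, which has derivative `-‖f'‖`.
Integrating `(x ^ (p s + 1) * F x ^ p)'` over `[0, r]` gives, for `I = ∫ x ^ (p s) F ^ p` and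
`B = ∫ x ^ (p (s + 1)) ‖f'‖ ^ p`,
`(p s + 1) I = r ^ (p s + 1) F(r) ^ p + p ∫ x ^ (p s + 1) F ^ (p - 1) ‖f'‖`,
and Hölder with exponents `1 - 1/p` and `1/p` bounds the last integral by `I ^ (1 - 1/p) B ^ (1/p)`.
An inequality `I ≤ c + d I ^ (1 - 1/p)` forces `I ^ (1/p) ≤ (2 c) ^ (1/p) + 2 d`.
-/

open MeasureTheory Metric Set

noncomputable section

/-- `f ∈ C^∞_ev([0,r])`: smooth on `[0,r]` (one-sided derivatives at the endpoints)
with all odd-order derivatives vanishing at `0`. -/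
def SmoothEvenOn (r : ℝ) (f : ℝ → ℂ) : Prop :=
  ContDiffOn ℝ (⊤ : ℕ∞) f (Icc 0 r) ∧
    ∀ n : ℕ, iteratedDerivWithin (2 * n + 1) f (Icc 0 r) 0 = 0

/-- `f ∈ C^∞_ev([0,∞))`. -/
def SmoothEvenIci (f : ℝ → ℂ) : Prop :=
  ContDiffOn ℝ (⊤ : ℕ∞) f (Ici 0) ∧
    ∀ n : ℕ, iteratedDerivWithin (2 * n + 1) f (Ici 0) 0 = 0

/-- `g j = D^j f` on `[0,r]`: each `g (j+1)` is the smooth even extension of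
`ρ ↦ ρ⁻¹ (g j)'(ρ)`. -/
def DIter (r : ℝ) (f : ℝ → ℂ) (g : ℕ → ℝ → ℂ) : Prop :=
  g 0 = f ∧ ∀ j : ℕ, SmoothEvenOn r (g (j + 1)) ∧
    ∀ ρ ∈ Ioc (0 : ℝ) r, g (j + 1) ρ = ρ⁻¹ * derivWithin (g j) (Icc 0 r) ρ

/-- `g j = D^j f` on `[0,∞)`. -/
def DIterIci (f : ℝ → ℂ) (g : ℕ → ℝ → ℂ) : Prop :=
  g 0 = f ∧ ∀ j : ℕ, SmoothEvenIci (g (j + 1)) ∧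
    ∀ ρ ∈ Ioi (0 : ℝ), g (j + 1) ρ = ρ⁻¹ * derivWithin (g j) (Ici 0) ρ

/-- Partial derivative `∂ᵢ` within the closed ball of radius `r`. -/
def pderivB (d : ℕ) (r : ℝ) (i : Fin d) (φ : EuclideanSpace ℝ (Fin d) → ℂ) :
    EuclideanSpace ℝ (Fin d) → ℂ :=
  fun x => fderivWithin ℝ φ (closedBall 0 r) x (EuclideanSpace.single i 1)

/-- `∂_{i₁} ⋯ ∂_{i_n}` within the closed ball, for a list of indices `[i₁,…,i_n]`. -/
def pderivList (d : ℕ) (r : ℝ) (I : List (Fin d)) (φ : EuclideanSpace ℝ (Fin d) → ℂ) :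
    EuclideanSpace ℝ (Fin d) → ℂ :=
  I.foldr (pderivB d r) φ

/-- `∂^α` within the closed ball, for a multi-index `α`. -/
def pderivMulti (d : ℕ) (r : ℝ) (α : Fin d → ℕ) (φ : EuclideanSpace ℝ (Fin d) → ℂ) :
    EuclideanSpace ℝ (Fin d) → ℂ :=
  pderivList d r ((List.finRange d).flatMap fun i => List.replicate (α i) i) φ

/-- Global partial derivative `∂ᵢ` on `ℝ^d`. -/
def pderivG (d : ℕ) (i : Fin d) (φ : EuclideanSpace ℝ (Fin d) → ℂ) :
    EuclideanSpace ℝ (Fin d) → ℂ :=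
  fun x => fderiv ℝ φ x (EuclideanSpace.single i 1)

def pderivListG (d : ℕ) (I : List (Fin d)) (φ : EuclideanSpace ℝ (Fin d) → ℂ) :
    EuclideanSpace ℝ (Fin d) → ℂ :=
  I.foldr (pderivG d) φ

/-- Global `∂^α` on `ℝ^d`, for a multi-index `α`. -/
def pderivMultiG (d : ℕ) (α : Fin d → ℕ) (φ : EuclideanSpace ℝ (Fin d) → ℂ) :
    EuclideanSpace ℝ (Fin d) → ℂ :=
  pderivListG d ((List.finRange d).flatMap fun i => List.replicate (α i) i) φ

/-- The Laplace operator on real-valued functions on `ℝ^d` (used on polynomials). -/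
def lap (d : ℕ) (ψ : EuclideanSpace ℝ (Fin d) → ℝ) : EuclideanSpace ℝ (Fin d) → ℝ :=
  fun x => ∑ i : Fin d,
    fderiv ℝ (fun y => fderiv ℝ ψ y (EuclideanSpace.single i 1)) x (EuclideanSpace.single i 1)

/-- The monomial `x ↦ x^α`. -/
def mono (d : ℕ) (α : Fin d → ℕ) : EuclideanSpace ℝ (Fin d) → ℝ :=
  fun x => ∏ i : Fin d, (x i) ^ (α i)

/-- `p^j_I(x) = (1/(2^j j!)) Δ^j (x_{i₁}⋯x_{i_n})` for a `d`-index `I` of length `n`. -/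
def pP (d n : ℕ) (j : ℕ) (I : Fin n → Fin d) : EuclideanSpace ℝ (Fin d) → ℝ :=
  fun x => (1 / (2 ^ j * (Nat.factorial j)) : ℝ) *
    (lap d)^[j] (fun y => ∏ k : Fin n, y (I k)) x

/-- Multi-indices `α ∈ ℕ₀^d` of length exactly `n`. -/
def multiIndices (d n : ℕ) : Finset (Fin d → ℕ) :=
  (Fintype.piFinset fun _ : Fin d => Finset.range (n + 1)).filter fun α => ∑ i, α i = n

/-- Multi-indices `α ∈ ℕ₀^d` of length at most `k`. -/
def multiIndicesLe (d k : ℕ) : Finset (Fin d → ℕ) :=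
  (Fintype.piFinset fun _ : Fin d => Finset.range (k + 1)).filter fun α => ∑ i, α i ≤ k

open intervalIntegral

theorem integral_rpow_mul_rpow_le_of_add_eq_one {α : Type*} [MeasurableSpace α] {μ : Measure α}
    {f g : α → ℝ} (hf₀ : 0 ≤ᵐ[μ] f) (hg₀ : 0 ≤ᵐ[μ] g) (hf : Integrable f μ) (hg : Integrable g μ)
    {a b : ℝ} (ha : 0 ≤ a) (hb : 0 ≤ b) (hab : a + b = 1) :
    ∫ x, f x ^ a * g x ^ b ∂μ ≤ (∫ x, f x ∂μ) ^ a * (∫ x, g x ∂μ) ^ b := by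
  have hf_int₀ := integral_nonneg_of_ae hf₀
  have hg_int₀ := integral_nonneg_of_ae hg₀
  have hlin : ∫⁻ x, ENNReal.ofReal (f x ^ a * g x ^ b) ∂μ ≤
      ENNReal.ofReal ((∫ x, f x ∂μ) ^ a * (∫ x, g x ∂μ) ^ b) := by
    calc ∫⁻ x, ENNReal.ofReal (f x ^ a * g x ^ b) ∂μ
        = ∫⁻ x, ENNReal.ofReal (f x) ^ a * ENNReal.ofReal (g x) ^ b ∂μ := by
          refine lintegral_congr_ae ?_
          filter_upwards [hf₀, hg₀] with x hfx hgx
          rw [ENNReal.ofReal_mul (Real.rpow_nonneg hfx a), ENNReal.ofReal_rpow_of_nonneg hfx ha,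
            ENNReal.ofReal_rpow_of_nonneg hgx hb]
      _ ≤ (∫⁻ x, ENNReal.ofReal (f x) ∂μ) ^ a * (∫⁻ x, ENNReal.ofReal (g x) ∂μ) ^ b :=
          ENNReal.lintegral_mul_norm_pow_le hf.1.aemeasurable.ennreal_ofReal
            hg.1.aemeasurable.ennreal_ofReal ha hb hab
      _ = _ := by
          rw [← ofReal_integral_eq_lintegral_ofReal hf hf₀,
            ← ofReal_integral_eq_lintegral_ofReal hg hg₀,
            ENNReal.ofReal_rpow_of_nonneg hf_int₀ ha, ENNReal.ofReal_rpow_of_nonneg hg_int₀ hb,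
            ← ENNReal.ofReal_mul (Real.rpow_nonneg hf_int₀ a)]
  have hmeas : AEStronglyMeasurable (fun x => f x ^ a * g x ^ b) μ :=
    ((hf.1.aemeasurable.pow_const a).mul (hg.1.aemeasurable.pow_const b)).aestronglyMeasurable
  have hnonneg : 0 ≤ᵐ[μ] fun x => f x ^ a * g x ^ b := by
    filter_upwards [hf₀, hg₀] with x hfx hgx
    exact mul_nonneg (Real.rpow_nonneg hfx a) (Real.rpow_nonneg hgx b)
  rw [integral_eq_lintegral_of_nonneg_ae hnonneg hmeas]
  exact ENNReal.toReal_le_of_le_ofReal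
    (mul_nonneg (Real.rpow_nonneg hf_int₀ a) (Real.rpow_nonneg hg_int₀ b)) hlin

theorem intervalIntegrable_rpow_mul_rpow {φ : ℝ → ℝ} {p q r : ℝ} (hp : 0 ≤ p) (hq : -1 < q)
    (hr : 0 ≤ r) (hφ : ContinuousOn φ (Icc 0 r)) :
    IntervalIntegrable (fun x => x ^ q * φ x ^ p) volume 0 r :=
  (intervalIntegrable_rpow' hq).mul_continuousOn
    (by rw [uIcc_of_le hr]; exact hφ.rpow_const fun _ _ => Or.inr hp)

theorem integral_rpow_mul_rpow_nonneg {φ : ℝ → ℝ} {p q r : ℝ} (hr : 0 ≤ r)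
    (hφ₀ : ∀ x ∈ Icc 0 r, 0 ≤ φ x) : 0 ≤ ∫ x in 0..r, x ^ q * φ x ^ p :=
  integral_nonneg hr fun x hx => mul_nonneg (Real.rpow_nonneg hx.1 _) (Real.rpow_nonneg (hφ₀ x hx) _)

theorem integral_rpow_mul_rpow_le_of_le {φ ψ : ℝ → ℝ} {p q r : ℝ} (hp : 0 ≤ p) (hq : -1 < q)
    (hr : 0 ≤ r) (hφ : ContinuousOn φ (Icc 0 r)) (hψ : ContinuousOn ψ (Icc 0 r))
    (hφ₀ : ∀ x ∈ Icc 0 r, 0 ≤ φ x) (hφψ : ∀ x ∈ Icc 0 r, φ x ≤ ψ x) :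
    ∫ x in 0..r, x ^ q * φ x ^ p ≤ ∫ x in 0..r, x ^ q * ψ x ^ p :=
  integral_mono_on hr (intervalIntegrable_rpow_mul_rpow hp hq hr hφ)
    (intervalIntegrable_rpow_mul_rpow hp hq hr hψ) fun x hx =>
      mul_le_mul_of_nonneg_left (Real.rpow_le_rpow (hφ₀ x hx) (hφψ x hx) hp)
        (Real.rpow_nonneg hx.1 _)

theorem integral_rpow_mul_rpow_by_parts {F F' : ℝ → ℝ} {p q r : ℝ} (hp : 1 ≤ p) (hq : -1 < q)
    (hr : 0 ≤ r) (hF : ContinuousOn F (Icc 0 r)) (hF' : IntervalIntegrable F' volume 0 r)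
    (hderiv : ∀ x ∈ Ioo 0 r, HasDerivAt F (F' x) x) :
    (q + 1) * (∫ x in 0..r, x ^ q * F x ^ p) +
        p * ∫ x in 0..r, x ^ (q + 1) * F x ^ (p - 1) * F' x = r ^ (q + 1) * F r ^ p := by
  have hq₁ : 0 < q + 1 := by linarith
  have hweight : ContinuousOn (fun x : ℝ => x ^ (q + 1)) (Icc 0 r) :=
    fun x _ => (Real.continuousAt_rpow_const x _ (Or.inr hq₁.le)).continuousWithinAt
  have hI₁ := intervalIntegrable_rpow_mul_rpow (p := p) (by linarith) hq hr hF
  have hI₂ : IntervalIntegrable (fun x => x ^ (q + 1) * F x ^ (p - 1) * F' x) volume 0 r :=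
    hF'.continuousOn_mul <| by
      rw [uIcc_of_le hr]
      exact hweight.mul (hF.rpow_const fun _ _ => Or.inr (by linarith))
  -- `1 ≤ p` makes `F ^ p` differentiable even where `F` vanishes
  have hG : ∀ x ∈ Ioo 0 r, HasDerivAt (fun y => y ^ (q + 1) * F y ^ p)
      ((q + 1) * (x ^ q * F x ^ p) + p * (x ^ (q + 1) * F x ^ (p - 1) * F' x)) x := by
    intro x hx
    have hxq := Real.hasDerivAt_rpow_const (x := x) (p := q + 1) (Or.inl hx.1.ne')
    refine (hxq.mul ((hderiv x hx).rpow_const (p := p) (Or.inr hp))).congr_deriv ?_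
    rw [add_sub_cancel_right]
    ring
  have hftc := integral_eq_sub_of_hasDeriv_right_of_le hr
    (hweight.mul (hF.rpow_const fun _ _ => Or.inr (by linarith)))
    (fun x hx => (hG x hx).hasDerivWithinAt) ((hI₁.const_mul _).add (hI₂.const_mul _))
  rwa [intervalIntegral.integral_add (hI₁.const_mul _) (hI₂.const_mul _),
    intervalIntegral.integral_const_mul, intervalIntegral.integral_const_mul,
    Pi.mul_apply, Pi.mul_apply, Real.zero_rpow hq₁.ne', zero_mul, sub_zero] at hftc

theorem rpow_mul_rpow_mul_rpow_mul_rpow {p s x y z : ℝ} (hp : 0 < p) (hx : 0 < x) (hy : 0 ≤ y)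
    (hz : 0 ≤ z) :
    (x ^ (p * s) * y ^ p) ^ (1 - 1 / p) * (x ^ (p * (s + 1)) * z ^ p) ^ (1 / p) =
      x ^ (p * s + 1) * y ^ (p - 1) * z := by
  have hexp : p * s + 1 = p * s * (1 - 1 / p) + (s + 1) := by field_simp; ring
  rw [Real.mul_rpow (by positivity) (by positivity), Real.mul_rpow (by positivity) (by positivity),
    ← Real.rpow_mul hx.le, ← Real.rpow_mul hy, ← Real.rpow_mul hx.le, ← Real.rpow_mul hz,
    show p * (1 - 1 / p) = p - 1 by field_simp, show p * (s + 1) * (1 / p) = s + 1 by field_simp,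
    mul_one_div_cancel hp.ne', Real.rpow_one, hexp, Real.rpow_add hx (p * s * (1 - 1 / p))]
  ring

theorem integral_rpow_mul_rpow_mul_le {F g : ℝ → ℝ} {p r s : ℝ} (hp : 1 ≤ p) (hr : 0 ≤ r)
    (hF₀ : ∀ x ∈ Icc 0 r, 0 ≤ F x) (hg₀ : ∀ x ∈ Icc 0 r, 0 ≤ g x)
    (hF : IntervalIntegrable (fun x => x ^ (p * s) * F x ^ p) volume 0 r)
    (hg : IntervalIntegrable (fun x => x ^ (p * (s + 1)) * g x ^ p) volume 0 r) :
    ∫ x in 0..r, x ^ (p * s + 1) * F x ^ (p - 1) * g x ≤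
      (∫ x in 0..r, x ^ (p * s) * F x ^ p) ^ (1 - 1 / p) *
        (∫ x in 0..r, x ^ (p * (s + 1)) * g x ^ p) ^ (1 / p) := by
  simp only [integral_of_le hr]
  rw [intervalIntegrable_iff_integrableOn_Ioc_of_le hr] at hF hg
  have hnonneg : ∀ {φ : ℝ → ℝ} {e : ℝ}, (∀ x ∈ Icc 0 r, 0 ≤ φ x) →
      0 ≤ᵐ[volume.restrict (Ioc 0 r)] fun x => x ^ e * φ x ^ p := fun hφ =>
    (ae_restrict_iff' measurableSet_Ioc).2 <| .of_forall fun x hx =>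
      mul_nonneg (Real.rpow_nonneg hx.1.le _) (Real.rpow_nonneg (hφ x (Ioc_subset_Icc_self hx)) _)
  refine le_of_eq_of_le (setIntegral_congr_fun measurableSet_Ioc fun x hx => ?_)
    (integral_rpow_mul_rpow_le_of_add_eq_one (hnonneg hF₀) (hnonneg hg₀) hF hg
      (by simpa using inv_le_one_of_one_le₀ hp) (by positivity) (by ring))
  exact (rpow_mul_rpow_mul_rpow_mul_rpow (by linarith) hx.1 (hF₀ x (Ioc_subset_Icc_self hx))
    (hg₀ x (Ioc_subset_Icc_self hx))).symm

theorem rpow_one_div_le_of_le_add_mul_rpow {A T B c d p : ℝ} (hp : 0 < p) (hA : 0 ≤ A)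
    (hT : 0 ≤ T) (hB : 0 ≤ B) (hc : 0 ≤ c) (hd : 0 ≤ d)
    (h : A ≤ c * T ^ p + d * B * A ^ (1 - 1 / p)) :
    A ^ (1 / p) ≤ (2 * c) ^ (1 / p) * T + 2 * d * B := by
  have hp' : 0 < 1 / p := by positivity
  rcases hA.eq_or_lt with rfl | hA₀
  · rw [Real.zero_rpow hp'.ne']
    positivity
  rcases le_total (d * B * A ^ (1 - 1 / p)) (c * T ^ p) with hsmall | hlarge
  · calc A ^ (1 / p) ≤ (2 * c * T ^ p) ^ (1 / p) := Real.rpow_le_rpow hA (by linarith) hp'.le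
      _ = (2 * c) ^ (1 / p) * T := by
        rw [Real.mul_rpow (by positivity) (by positivity), one_div, Real.rpow_rpow_inv hT hp.ne']
      _ ≤ _ := le_add_of_nonneg_right (by positivity)
  · have hApos : 0 < A ^ (1 / p) := Real.rpow_pos_of_pos hA₀ _
    have h2 : A ≤ 2 * d * B * (A / A ^ (1 / p)) := by
      rw [Real.rpow_sub hA₀, Real.rpow_one] at h hlarge
      linarith
    rw [mul_div_assoc', le_div_iff₀ hApos] at h2
    have : A ^ (1 / p) ≤ 2 * d * B := le_of_mul_le_mul_left (by linarith) hA₀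
    linarith [mul_nonneg (Real.rpow_nonneg (by positivity : (0 : ℝ) ≤ 2 * c) (1 / p)) hT]

theorem rpow_integral_rpow_mul_rpow_le_of_hasDerivAt {F g : ℝ → ℝ} {p r s : ℝ} (hp : 1 ≤ p)
    (hs : -1 < p * s) (hr : 0 ≤ r) (hF : ContinuousOn F (Icc 0 r))
    (hF₀ : ∀ x ∈ Icc 0 r, 0 ≤ F x) (hg : ContinuousOn g (Icc 0 r))
    (hg₀ : ∀ x ∈ Icc 0 r, 0 ≤ g x) (hderiv : ∀ x ∈ Ioo 0 r, HasDerivAt F (-g x) x) :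
    (∫ x in 0..r, x ^ (p * s) * F x ^ p) ^ (1 / p) ≤
      (2 * (r ^ (p * s + 1) / (p * s + 1))) ^ (1 / p) * F r +
        2 * (p / (p * s + 1)) * (∫ x in 0..r, x ^ (p * (s + 1)) * g x ^ p) ^ (1 / p) := by
  have hp₀ : 0 < p := by linarith
  have hs₁ : 0 < p * s + 1 := by linarith
  have hparts := integral_rpow_mul_rpow_by_parts hp hs hr hF
    (hg.intervalIntegrable_of_Icc hr).neg hderiv
  simp only [Pi.neg_apply, mul_neg, intervalIntegral.integral_neg] at hparts
  have hholder := integral_rpow_mul_rpow_mul_le hp hr hF₀ hg₀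
    (intervalIntegrable_rpow_mul_rpow hp₀.le hs hr hF)
    (intervalIntegrable_rpow_mul_rpow hp₀.le (by nlinarith) hr hg)
  set I := ∫ x in 0..r, x ^ (p * s) * F x ^ p
  set B := ∫ x in 0..r, x ^ (p * (s + 1)) * g x ^ p
  refine rpow_one_div_le_of_le_add_mul_rpow hp₀ (integral_rpow_mul_rpow_nonneg hr hF₀)
    (hF₀ r ⟨hr, le_rfl⟩) (Real.rpow_nonneg (integral_rpow_mul_rpow_nonneg hr hg₀) _)
    (by positivity) (by positivity) ?_
  rw [div_mul_eq_mul_div, div_mul_eq_mul_div, div_mul_eq_mul_div, ← add_div, le_div_iff₀ hs₁]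
  linarith [mul_le_mul_of_nonneg_left hholder hp₀.le]

section TailMajorant

variable {E : Type*} [NormedAddCommGroup E] [NormedSpace ℝ E] {f : ℝ → E} {a b x : ℝ}

def tailMajorant (f : ℝ → E) (a b x : ℝ) : ℝ :=
  ‖f b‖ + ∫ t in x..b, ‖derivWithin f (Icc a b) t‖

@[simp]
theorem tailMajorant_right : tailMajorant f a b b = ‖f b‖ := by
  simp [tailMajorant]

theorem continuousOn_norm_derivWithin_Icc (hf : ContDiffOn ℝ 1 f (Icc a b)) (hab : a < b) :
    ContinuousOn (fun t => ‖derivWithin f (Icc a b) t‖) (Icc a b) :=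
  (hf.continuousOn_derivWithin (uniqueDiffOn_Icc hab) le_rfl).norm

theorem continuousOn_tailMajorant (hf : ContDiffOn ℝ 1 f (Icc a b)) (hab : a < b) :
    ContinuousOn (tailMajorant f a b) (Icc a b) := by
  have hint : IntegrableOn (fun t => ‖derivWithin f (Icc a b) t‖) (uIcc a b) := by
    rw [uIcc_of_le hab.le]
    exact (continuousOn_norm_derivWithin_Icc hf hab).integrableOn_Icc
  have h := continuousOn_primitive_interval_left hint
  rw [uIcc_of_le hab.le] at h
  exact continuousOn_const.add h

theorem hasDerivAt_tailMajorant (hf : ContDiffOn ℝ 1 f (Icc a b)) (hab : a < b)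
    (hx : x ∈ Ioo a b) :
    HasDerivAt (tailMajorant f a b) (-‖derivWithin f (Icc a b) x‖) x := by
  have hcont := continuousOn_norm_derivWithin_Icc hf hab
  exact (integral_hasDerivAt_left
    ((hcont.mono (Icc_subset_Icc_left hx.1.le)).intervalIntegrable_of_Icc hx.2.le)
    ((hcont.mono Ioo_subset_Icc_self).stronglyMeasurableAtFilter isOpen_Ioo x hx)
    (hcont.continuousAt (Icc_mem_nhds hx.1 hx.2))).const_add _

theorem norm_le_tailMajorant [CompleteSpace E] (hf : ContDiffOn ℝ 1 f (Icc a b)) (hab : a < b)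
    (hx : x ∈ Icc a b) : ‖f x‖ ≤ tailMajorant f a b x := by
  have hsub : Icc x b ⊆ Icc a b := Icc_subset_Icc_left hx.1
  have hftc : ∫ t in x..b, derivWithin f (Icc a b) t = f b - f x := by
    refine integral_eq_sub_of_hasDeriv_right_of_le hx.2 (hf.continuousOn.mono hsub)
      (fun t ht => ?_) ?_
    · have ht' : t ∈ Ioo a b := ⟨hx.1.trans_lt ht.1, ht.2⟩
      exact ((hf.differentiableOn one_ne_zero t (Ioo_subset_Icc_self ht')).hasDerivWithinAt
        |>.hasDerivAt (Icc_mem_nhds ht'.1 ht'.2)).hasDerivWithinAt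
    · exact ((hf.continuousOn_derivWithin (uniqueDiffOn_Icc hab) le_rfl).mono hsub)
        |>.intervalIntegrable_of_Icc hx.2
  calc ‖f x‖ ≤ ‖f b‖ + ‖f b - f x‖ := norm_le_insert _ _
    _ ≤ tailMajorant f a b x := by
      rw [tailMajorant, ← hftc]
      gcongr
      exact norm_integral_le_integral_norm hx.2

end TailMajorant

/-- Hardy-type inequality on `[0,r]`:
`‖(·)^s f‖_{L^p(0,r)} ≤ C (|f(r)| + ‖(·)^{s+1} f'‖_{L^p(0,r)})`. -/
theorem hardy_inequality_Icc (p r s : ℝ) (hp : 1 ≤ p) (hr : 0 < r) (hs : -(1 / p) < s) :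
    ∃ C : ℝ, 0 < C ∧ ∀ f : ℝ → ℂ, ContDiffOn ℝ 1 f (Icc 0 r) →
      (∫ x in (0 : ℝ)..r, x ^ (p * s) * ‖f x‖ ^ p) ^ (1 / p) ≤
        C * (‖f r‖ +
          (∫ x in (0 : ℝ)..r, x ^ (p * (s + 1)) * ‖derivWithin f (Icc 0 r) x‖ ^ p) ^ (1 / p)) := by
  have hp₀ : 0 < p := by linarith
  have hps : -1 < p * s := by
    rw [← neg_div, div_lt_iff₀ hp₀] at hs
    linarith
  refine ⟨max ((2 * (r ^ (p * s + 1) / (p * s + 1))) ^ (1 / p)) (2 * (p / (p * s + 1))),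
    lt_max_of_lt_right (mul_pos two_pos (div_pos hp₀ (by linarith))), fun f hf => ?_⟩
  have hFf : ∀ x ∈ Icc 0 r, ‖f x‖ ≤ tailMajorant f 0 r x := fun x hx =>
    norm_le_tailMajorant hf hr hx
  have hF := continuousOn_tailMajorant hf hr
  have hB₀ := integral_rpow_mul_rpow_nonneg (q := p * (s + 1)) (p := p) hr.le
    fun x _ => norm_nonneg (derivWithin f (Icc 0 r) x)
  calc (∫ x in (0 : ℝ)..r, x ^ (p * s) * ‖f x‖ ^ p) ^ (1 / p)
      ≤ (∫ x in (0 : ℝ)..r, x ^ (p * s) * tailMajorant f 0 r x ^ p) ^ (1 / p) :=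
        Real.rpow_le_rpow (integral_rpow_mul_rpow_nonneg hr.le fun _ _ => norm_nonneg _)
          (integral_rpow_mul_rpow_le_of_le hp₀.le hps hr.le hf.continuousOn.norm hF
            (fun _ _ => norm_nonneg _) hFf) (by positivity)
    _ ≤ _ := rpow_integral_rpow_mul_rpow_le_of_hasDerivAt hp hps hr.le hF
        (fun x hx => (norm_nonneg _).trans (hFf x hx)) (continuousOn_norm_derivWithin_Icc hf hr)
        (fun _ _ => norm_nonneg _) (fun x hx => hasDerivAt_tailMajorant hf hr hx)
    _ ≤ _ := by
        rw [tailMajorant_right, mul_add (max _ _)]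
        exact add_le_add (mul_le_mul_of_nonneg_right (le_max_left _ _) (norm_nonneg (f r)))
          (mul_le_mul_of_nonneg_right (le_max_right _ _) (Real.rpow_nonneg hB₀ _))
end
end

section
/- Let p ≥ 1 and s > −1/p be real numbers. There exists a constant C > 0, depending only on p and s, such that for every continuously differentiable compactly supported function f : [0,∞) → ℂ: (∫₀^∞ x^{ps} |f(x)|^p dx)^{1/p} ≤ C (∫₀^∞ x^{p(s+1)} |f'(x)|^p dx)^{1/p}. -/
open MeasureTheory Metric Set

noncomputable section

/-!
Hardy's argument. Write `f x = -∫_x^∞ f'`. For `x > 0` and any weight exponent `a` with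
`1 - 1/p < a < s + 1`, Hölder's inequality applied to `f' = (t^a f') · t^(-a)` on `(x, ∞)` gives
`|f x|^p ≤ M x^(p-1-ap) ∫_x^∞ t^(ap) |f'|^p`. Multiplying by `x^(ps)`, integrating over `x > 0`
and exchanging the integrals, the inner integral `∫_0^t x^(ps+p-1-ap) dx` is
`t^(p(s+1-a)) / (p(s+1-a))`, which combines with `t^(ap)` to the weight `t^(p(s+1))`.
-/

open scoped ENNReal

lemma lintegral_Ioo_zero_ofReal_rpow {b t : ℝ} (hb : -1 < b) (ht : 0 < t) :
    ∫⁻ x in Ioo 0 t, ENNReal.ofReal (x ^ b) = ENNReal.ofReal (t ^ (b + 1) / (b + 1)) := by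
  have hint : IntegrableOn (fun x : ℝ ↦ x ^ b) (Ioc 0 t) :=
    (intervalIntegrable_iff_integrableOn_Ioc_of_le ht.le).mp
      (intervalIntegral.intervalIntegrable_rpow' hb)
  rw [setLIntegral_congr Ioo_ae_eq_Ioc, ← ofReal_integral_eq_lintegral_ofReal hint,
    ← intervalIntegral.integral_of_le ht.le, integral_rpow (Or.inl hb),
    Real.zero_rpow (by linarith), sub_zero]
  filter_upwards [ae_restrict_mem measurableSet_Ioc] with x hx
  exact Real.rpow_nonneg hx.1.le b

lemma lintegral_Ioi_ofReal_rpow {c x : ℝ} (hc : c < -1) (hx : 0 < x) :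
    ∫⁻ t in Ioi x, ENNReal.ofReal (t ^ c) = ENNReal.ofReal (-x ^ (c + 1) / (c + 1)) := by
  rw [← ofReal_integral_eq_lintegral_ofReal (integrableOn_Ioi_rpow_of_lt hc hx),
    integral_Ioi_rpow_of_lt hc hx]
  filter_upwards [ae_restrict_mem measurableSet_Ioi] with t ht
  exact Real.rpow_nonneg (hx.trans ht).le c

lemma lintegral_Ioi_mul_lintegral_Ioi {w ψ : ℝ → ℝ≥0∞} (hw : Measurable w) (hψ : Measurable ψ) :
    ∫⁻ x in Ioi 0, w x * ∫⁻ t in Ioi x, ψ t = ∫⁻ t in Ioi 0, (∫⁻ x in Ioo 0 t, w x) * ψ t := by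
  set F : ℝ → ℝ → ℝ≥0∞ := fun x t ↦ (Ioi 0).indicator w x * (Ioi x).indicator ψ t
  have hF : Measurable (Function.uncurry F) := by
    have : Function.uncurry F =
        fun z ↦ (Ioi 0).indicator w z.1 * {z : ℝ × ℝ | z.1 < z.2}.indicator (fun z ↦ ψ z.2) z := by
      ext ⟨x, t⟩; simp [F, indicator]
    rw [this]
    exact ((hw.indicator measurableSet_Ioi).comp measurable_fst).mul
      ((hψ.comp measurable_snd).indicator (measurableSet_lt measurable_fst measurable_snd))
  calc ∫⁻ x in Ioi 0, w x * ∫⁻ t in Ioi x, ψ t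
      = ∫⁻ x, ∫⁻ t, F x t := by
        rw [← lintegral_indicator measurableSet_Ioi]
        refine lintegral_congr fun x ↦ ?_
        rw [lintegral_const_mul _ (hψ.indicator measurableSet_Ioi),
          lintegral_indicator measurableSet_Ioi]
        by_cases hx : x ∈ Ioi 0 <;> simp [hx]
    _ = ∫⁻ t, ∫⁻ x, F x t := lintegral_lintegral_swap hF.aemeasurable
    _ = ∫⁻ t in Ioi 0, (∫⁻ x in Ioo 0 t, w x) * ψ t := by
        rw [← lintegral_indicator measurableSet_Ioi]
        refine lintegral_congr fun t ↦ ?_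
        have hFt : ∀ x, F x t = (Ioo 0 t).indicator w x * ψ t := fun x ↦ by
          by_cases h0 : 0 < x <;> by_cases h1 : x < t <;> simp [F, indicator, h0, h1]
        simp_rw [hFt]
        rw [lintegral_mul_const _ (hw.indicator measurableSet_Ioo),
          lintegral_indicator measurableSet_Ioo]
        by_cases ht : 0 < t <;> simp [ht]

lemma mul_sub_add_one_pos {p a : ℝ} (hp : 0 < p) (ha : 1 - 1 / p < a) : 0 < a * p - p + 1 := by
  have := mul_lt_mul_of_pos_right ha hp
  rw [sub_mul, one_div_mul_cancel hp.ne'] at this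
  linarith

/-- `(p - 1) / (a * p - p + 1)` is `1 / (a * q - 1)` for the conjugate exponent `q` of `p`, so
this is `(∫_1^∞ t^(-a q))^(p / q)`; at `p = 1` it is `0 ^ 0 = 1`. -/
def hardyWeightConst (p a : ℝ) : ℝ := ((p - 1) / (a * p - p + 1)) ^ (p - 1)

lemma hardyWeightConst_pos {p a : ℝ} (hp : 1 ≤ p) (ha : 1 - 1 / p < a) :
    0 < hardyWeightConst p a := by
  rcases hp.eq_or_lt with rfl | hp
  · simp [hardyWeightConst]
  · exact Real.rpow_pos_of_pos (div_pos (by linarith) (mul_sub_add_one_pos (by linarith) ha)) _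

lemma rpow_lintegral_Ioi_le_of_one_lt {p a x : ℝ} (hp : 1 < p) (ha : 1 - 1 / p < a) (hx : 0 < x)
    {φ : ℝ → ℝ≥0∞} (hφ : Measurable φ) :
    (∫⁻ t in Ioi x, φ t) ^ p ≤
      ENNReal.ofReal (hardyWeightConst p a * x ^ (p - 1 - a * p)) *
        ∫⁻ t in Ioi x, ENNReal.ofReal (t ^ (a * p)) * φ t ^ p := by
  have hpq : p.HolderConjugate (p / (p - 1)) := .conjExponent hp
  set q := p / (p - 1)
  have hp0 : 0 < p := by linarith
  have hp1 : 0 < p - 1 := by linarith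
  have hap : 0 < a * p - p + 1 := mul_sub_add_one_pos hp0 ha
  have haq : -(a * q) < -1 := by
    rw [neg_lt_neg_iff, mul_div_assoc', one_lt_div hp1]
    linarith
  have hM : 0 ≤ (p - 1) / (a * p - p + 1) := by positivity
  have hsplit : ∀ t ∈ Ioi x,
      φ t = ((fun t ↦ φ t * ENNReal.ofReal (t ^ a)) * (fun t ↦ ENNReal.ofReal (t ^ (-a)))) t := by
    intro t ht
    rw [Pi.mul_apply, mul_assoc, ← ENNReal.ofReal_mul (Real.rpow_nonneg (hx.trans ht).le a),
      ← Real.rpow_add (hx.trans ht), add_neg_cancel, Real.rpow_zero, ENNReal.ofReal_one, mul_one]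
  have hA : ∫⁻ t in Ioi x, (φ t * ENNReal.ofReal (t ^ a)) ^ p =
      ∫⁻ t in Ioi x, ENNReal.ofReal (t ^ (a * p)) * φ t ^ p := by
    refine setLIntegral_congr_fun measurableSet_Ioi fun t ht ↦ ?_
    rw [ENNReal.mul_rpow_of_nonneg _ _ hp0.le, mul_comm,
      ENNReal.ofReal_rpow_of_pos (Real.rpow_pos_of_pos (hx.trans ht) a),
      ← Real.rpow_mul (hx.trans ht).le]
  have hB : ∫⁻ t in Ioi x, ENNReal.ofReal (t ^ (-a)) ^ q =
      ENNReal.ofReal ((p - 1) / (a * p - p + 1) * x ^ (1 - a * q)) := by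
    calc ∫⁻ t in Ioi x, ENNReal.ofReal (t ^ (-a)) ^ q
        = ∫⁻ t in Ioi x, ENNReal.ofReal (t ^ (-(a * q))) := by
          refine setLIntegral_congr_fun measurableSet_Ioi fun t ht ↦ ?_
          rw [ENNReal.ofReal_rpow_of_pos (Real.rpow_pos_of_pos (hx.trans ht) _),
            ← Real.rpow_mul (hx.trans ht).le, neg_mul]
      _ = _ := by
          rw [lintegral_Ioi_ofReal_rpow haq hx, neg_add_eq_sub, neg_div, ← div_neg, neg_sub]
          congr 1
          rw [div_eq_mul_inv, mul_comm]
          congr 1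
          simp only [q]
          field_simp
          ring
  calc (∫⁻ t in Ioi x, φ t) ^ p
      ≤ ((∫⁻ t in Ioi x, (φ t * ENNReal.ofReal (t ^ a)) ^ p) ^ (1 / p) *
          (∫⁻ t in Ioi x, ENNReal.ofReal (t ^ (-a)) ^ q) ^ (1 / q)) ^ p := by
        rw [setLIntegral_congr_fun measurableSet_Ioi hsplit]
        gcongr
        exact ENNReal.lintegral_mul_le_Lp_mul_Lq _ hpq (by fun_prop) (by fun_prop)
    _ = (∫⁻ t in Ioi x, ENNReal.ofReal (t ^ (a * p)) * φ t ^ p) *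
          ENNReal.ofReal (((p - 1) / (a * p - p + 1) * x ^ (1 - a * q)) ^ (p - 1)) := by
        rw [ENNReal.mul_rpow_of_nonneg _ _ hp0.le, ← ENNReal.rpow_mul, ← ENNReal.rpow_mul,
          one_div_mul_cancel hp0.ne', ENNReal.rpow_one, hA, hB, one_div_mul_eq_div,
          hpq.div_conj_eq_sub_one, ENNReal.ofReal_rpow_of_nonneg (by positivity) hp1.le]
    _ = _ := by
        rw [mul_comm, Real.mul_rpow hM (by positivity), ← Real.rpow_mul hx.le, hardyWeightConst]
        congr 4
        simp only [q]
        field_simp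

lemma rpow_lintegral_Ioi_le {p a x : ℝ} (hp : 1 ≤ p) (ha : 1 - 1 / p < a) (hx : 0 < x)
    {φ : ℝ → ℝ≥0∞} (hφ : Measurable φ) :
    (∫⁻ t in Ioi x, φ t) ^ p ≤
      ENNReal.ofReal (hardyWeightConst p a * x ^ (p - 1 - a * p)) *
        ∫⁻ t in Ioi x, ENNReal.ofReal (t ^ (a * p)) * φ t ^ p := by
  rcases hp.eq_or_lt with rfl | hp
  · have ha0 : 0 < a := by simpa using ha
    simp only [hardyWeightConst, sub_self, Real.rpow_zero, one_mul, mul_one, ENNReal.rpow_one,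
      zero_sub]
    rw [← lintegral_const_mul' _ _ ENNReal.ofReal_ne_top]
    refine setLIntegral_mono' measurableSet_Ioi fun t ht ↦ ?_
    have hxt : 1 ≤ x ^ (-a) * t ^ a := by
      rw [Real.rpow_neg hx.le, ← div_eq_inv_mul, ← Real.div_rpow (hx.trans ht).le hx.le]
      exact Real.one_le_rpow ((one_le_div hx).mpr (le_of_lt ht)) ha0.le
    calc φ t = ENNReal.ofReal 1 * φ t := by rw [ENNReal.ofReal_one, one_mul]
      _ ≤ ENNReal.ofReal (x ^ (-a) * t ^ a) * φ t := by gcongr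
      _ = _ := by rw [ENNReal.ofReal_mul (Real.rpow_nonneg hx.le _), mul_assoc]
  · exact rpow_lintegral_Ioi_le_of_one_lt hp ha hx hφ

def hardyConst (p s a : ℝ) : ℝ := hardyWeightConst p a / (p * (s + 1 - a))

lemma hardyConst_pos {p s a : ℝ} (hp : 1 ≤ p) (ha : 1 - 1 / p < a) (has : a < s + 1) :
    0 < hardyConst p s a :=
  div_pos (hardyWeightConst_pos hp ha) (mul_pos (by linarith) (by linarith))

theorem lintegral_rpow_mul_rpow_lintegral_Ioi_le {p s a : ℝ} (hp : 1 ≤ p) (ha : 1 - 1 / p < a)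
    (has : a < s + 1) {φ : ℝ → ℝ≥0∞} (hφ : Measurable φ) :
    ∫⁻ x in Ioi 0, ENNReal.ofReal (x ^ (p * s)) * (∫⁻ t in Ioi x, φ t) ^ p ≤
      ENNReal.ofReal (hardyConst p s a) *
        ∫⁻ t in Ioi 0, ENNReal.ofReal (t ^ (p * (s + 1))) * φ t ^ p := by
  set M := hardyWeightConst p a
  set b := p * s + (p - 1 - a * p)
  have hb : b + 1 = p * (s + 1 - a) := by ring
  have hb0 : 0 < b + 1 := by rw [hb]; exact mul_pos (by linarith) (by linarith)
  have hM : 0 ≤ M := (hardyWeightConst_pos hp ha).le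
  set g : ℝ → ℝ≥0∞ := fun t ↦ ENNReal.ofReal (t ^ (a * p)) * φ t ^ p
  calc ∫⁻ x in Ioi 0, ENNReal.ofReal (x ^ (p * s)) * (∫⁻ t in Ioi x, φ t) ^ p
      ≤ ∫⁻ x in Ioi 0, ENNReal.ofReal M * (ENNReal.ofReal (x ^ b) * ∫⁻ t in Ioi x, g t) := by
        refine setLIntegral_mono' measurableSet_Ioi fun x (hx : 0 < x) ↦ ?_
        calc ENNReal.ofReal (x ^ (p * s)) * (∫⁻ t in Ioi x, φ t) ^ p
            ≤ ENNReal.ofReal (x ^ (p * s)) *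
                (ENNReal.ofReal (M * x ^ (p - 1 - a * p)) * ∫⁻ t in Ioi x, g t) := by
              gcongr
              exact rpow_lintegral_Ioi_le hp ha hx hφ
          _ = _ := by
              rw [← mul_assoc, ← mul_assoc, ← ENNReal.ofReal_mul (by positivity),
                ← ENNReal.ofReal_mul hM, Real.rpow_add hx]
              ring_nf
    _ = ENNReal.ofReal M * ∫⁻ t in Ioi 0, (∫⁻ x in Ioo 0 t, ENNReal.ofReal (x ^ b)) * g t := by
        rw [lintegral_const_mul' _ _ ENNReal.ofReal_ne_top,
          lintegral_Ioi_mul_lintegral_Ioi (by fun_prop) (by fun_prop)]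
    _ = ENNReal.ofReal M * ∫⁻ t in Ioi 0, ENNReal.ofReal (1 / (p * (s + 1 - a))) *
          (ENNReal.ofReal (t ^ (p * (s + 1))) * φ t ^ p) := by
        congr 1
        refine setLIntegral_congr_fun measurableSet_Ioi fun t (ht : 0 < t) ↦ ?_
        rw [lintegral_Ioo_zero_ofReal_rpow (by linarith) ht, ← mul_assoc, ← mul_assoc,
          ← ENNReal.ofReal_mul (by positivity), ← ENNReal.ofReal_mul (by positivity), hb,
          div_mul_eq_mul_div, ← Real.rpow_add ht]
        rw [show p * (s + 1 - a) + a * p = p * (s + 1) by ring, one_div_mul_eq_div]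
    _ = _ := by
        rw [lintegral_const_mul' _ _ ENNReal.ofReal_ne_top, ← mul_assoc,
          ← ENNReal.ofReal_mul hM, mul_one_div, hardyConst]

lemma ofReal_integral_le_lintegral_ofReal {α : Type*} [MeasurableSpace α] {μ : Measure α}
    {g : α → ℝ} (hg : 0 ≤ᵐ[μ] g) : ENNReal.ofReal (∫ x, g x ∂μ) ≤ ∫⁻ x, ENNReal.ofReal (g x) ∂μ :=
  calc ENNReal.ofReal (∫ x, g x ∂μ) ≤ ‖∫ x, g x ∂μ‖ₑ := by
        rw [Real.enorm_eq_ofReal_abs]; exact ENNReal.ofReal_le_ofReal (le_abs_self _)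
    _ ≤ ∫⁻ x, ‖g x‖ₑ ∂μ := enorm_integral_le_lintegral_enorm _
    _ = ∫⁻ x, ENNReal.ofReal (g x) ∂μ :=
        lintegral_congr_ae <| hg.mono fun x hx ↦ Real.enorm_of_nonneg hx

lemma integrableOn_Ioi_of_continuousOn_Ici {g : ℝ → ℝ} {R : ℝ} (hg : ContinuousOn g (Ici 0))
    (hR : ∀ x, R < x → g x = 0) : IntegrableOn g (Ioi 0) := by
  have hcover : Ioi 0 ⊆ Icc 0 R ∪ Ioi R := fun x (hx : 0 < x) ↦
    (le_or_gt x R).imp (fun hxR ↦ ⟨hx.le, hxR⟩) id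
  refine IntegrableOn.mono_set ?_ hcover
  exact (hg.mono Icc_subset_Ici_self).integrableOn_Icc.union
    (integrableOn_zero.congr_fun (fun x hx ↦ (hR x hx).symm) measurableSet_Ioi)

section

variable {E : Type*} [NormedAddCommGroup E] [NormedSpace ℝ E]

lemma enorm_le_lintegral_Ioi_enorm_deriv [CompleteSpace E] {f : ℝ → E} {a x R : ℝ}
    (hf : ContDiffOn ℝ 1 f (Ioi a)) (hax : a < x) (hR : ∀ y, R ≤ y → f y = 0) :
    ‖f x‖ₑ ≤ ∫⁻ t in Ioi x, ‖deriv f t‖ₑ := by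
  rcases le_or_gt R x with hRx | hxR
  · simp [hR x hRx]
  have hsub : Icc x R ⊆ Ioi a := fun t ht ↦ hax.trans_le ht.1
  have hftc : ∫ t in x..R, deriv f t = f R - f x := by
    refine intervalIntegral.integral_eq_sub_of_hasDerivAt (fun t ht ↦ ?_)
      ((hf.continuousOn_deriv_of_isOpen isOpen_Ioi le_rfl).mono hsub
        |>.intervalIntegrable_of_Icc hxR.le)
    have ht : t ∈ Ioi a := hsub (uIcc_of_le hxR.le ▸ ht)
    exact ((hf.differentiableOn one_ne_zero t ht).differentiableAt
      (isOpen_Ioi.mem_nhds ht)).hasDerivAt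
  calc ‖f x‖ₑ = ‖∫ t in Ioc x R, deriv f t‖ₑ := by
        rw [← intervalIntegral.integral_of_le hxR.le, hftc, hR R le_rfl, zero_sub, enorm_neg]
    _ ≤ ∫⁻ t in Ioc x R, ‖deriv f t‖ₑ := enorm_integral_le_lintegral_enorm _
    _ ≤ ∫⁻ t in Ioi x, ‖deriv f t‖ₑ := lintegral_mono_set Ioc_subset_Ioi_self

theorem integral_rpow_mul_norm_rpow_le [CompleteSpace E] {p s a : ℝ} (hp : 1 ≤ p)
    (ha : 1 - 1 / p < a) (has : a < s + 1)
    {f : ℝ → E} (hf : ContDiffOn ℝ 1 f (Ioi 0)) {R : ℝ} (hR : ∀ x, R ≤ x → f x = 0)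
    (hint : IntegrableOn (fun x ↦ x ^ (p * (s + 1)) * ‖deriv f x‖ ^ p) (Ioi 0)) :
    ∫ x in Ioi 0, x ^ (p * s) * ‖f x‖ ^ p ≤
      hardyConst p s a * ∫ x in Ioi 0, x ^ (p * (s + 1)) * ‖deriv f x‖ ^ p := by
  have hp0 : 0 < p := by linarith
  have hK := hardyConst_pos hp ha has
  have hofReal : ∀ e : ℝ, ∀ x ∈ Ioi (0 : ℝ), ∀ v : E,
      ENNReal.ofReal (x ^ e * ‖v‖ ^ p) = ENNReal.ofReal (x ^ e) * ‖v‖ₑ ^ p := fun e x hx v ↦ by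
    rw [ENNReal.ofReal_mul (Real.rpow_nonneg (le_of_lt hx) _),
      ← ENNReal.ofReal_rpow_of_nonneg (norm_nonneg _) hp0.le, ofReal_norm]
  have hnonneg : ∀ (e : ℝ) (g : ℝ → E),
      0 ≤ᵐ[volume.restrict (Ioi 0)] fun x ↦ x ^ e * ‖g x‖ ^ p :=
    fun e g ↦ ae_restrict_of_forall_mem measurableSet_Ioi fun x (hx : 0 < x) ↦ by positivity
  rw [← ENNReal.ofReal_le_ofReal_iff (mul_nonneg hK.le (integral_nonneg_of_ae (hnonneg _ _))),
    ENNReal.ofReal_mul hK.le, ofReal_integral_eq_lintegral_ofReal hint (hnonneg _ _),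
    setLIntegral_congr_fun measurableSet_Ioi fun x hx ↦ hofReal _ x hx _]
  calc ENNReal.ofReal (∫ x in Ioi 0, x ^ (p * s) * ‖f x‖ ^ p)
      ≤ ∫⁻ x in Ioi 0, ENNReal.ofReal (x ^ (p * s) * ‖f x‖ ^ p) :=
        ofReal_integral_le_lintegral_ofReal (hnonneg _ _)
    _ = ∫⁻ x in Ioi 0, ENNReal.ofReal (x ^ (p * s)) * ‖f x‖ₑ ^ p :=
        setLIntegral_congr_fun measurableSet_Ioi fun x hx ↦ hofReal _ x hx _
    _ ≤ ∫⁻ x in Ioi 0, ENNReal.ofReal (x ^ (p * s)) * (∫⁻ t in Ioi x, ‖deriv f t‖ₑ) ^ p := by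
        refine setLIntegral_mono' measurableSet_Ioi fun x (hx : 0 < x) ↦ ?_
        gcongr
        exact enorm_le_lintegral_Ioi_enorm_deriv hf hx hR
    _ ≤ _ := lintegral_rpow_mul_rpow_lintegral_Ioi_le hp ha has (stronglyMeasurable_deriv f).enorm

lemma integrableOn_Ioi_rpow_mul_norm_deriv_rpow {p e : ℝ} (hp : 0 < p) (he : 0 ≤ e) {f : ℝ → E}
    (hf : ContDiffOn ℝ 1 f (Ici 0)) {R : ℝ} (hR : ∀ x, R ≤ x → f x = 0) :
    IntegrableOn (fun x ↦ x ^ e * ‖deriv f x‖ ^ p) (Ioi 0) := by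
  have hderiv : EqOn (derivWithin f (Ici 0)) (deriv f) (Ioi 0) := fun x hx ↦
    derivWithin_of_mem_nhds (Ici_mem_nhds hx)
  have hcont : ContinuousOn (fun x ↦ x ^ e * ‖derivWithin f (Ici 0) x‖ ^ p) (Ici 0) :=
    (continuousOn_id.rpow_const fun _ _ ↦ Or.inr he).mul
      ((hf.continuousOn_derivWithin (uniqueDiffOn_Ici 0) le_rfl).norm.rpow_const
        fun _ _ ↦ Or.inr hp.le)
  have hzero : ∀ x, max R 0 < x → x ^ e * ‖derivWithin f (Ici 0) x‖ ^ p = 0 := by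
    intro x hx
    have hfx : f =ᶠ[nhds x] fun _ ↦ 0 :=
      Filter.eventually_of_mem (Ioi_mem_nhds (le_max_left R 0 |>.trans_lt hx)) fun y hy ↦
        hR y (le_of_lt hy)
    rw [hderiv (le_max_right R 0 |>.trans_lt hx), hfx.deriv_eq, deriv_const, norm_zero,
      Real.zero_rpow hp.ne', mul_zero]
  exact (integrableOn_Ioi_of_continuousOn_Ici hcont hzero).congr_fun
    (fun x hx ↦ by simp only [hderiv hx]) measurableSet_Ioi

end

/-- Hardy-type inequality on `[0,∞)`:
`‖(·)^s f‖_{L^p(0,∞)} ≤ C ‖(·)^{s+1} f'‖_{L^p(0,∞)}` for `f ∈ C¹_c([0,∞))`. -/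
theorem hardy_inequality_Ici (p s : ℝ) (hp : 1 ≤ p) (hs : -(1 / p) < s) :
    ∃ C : ℝ, 0 < C ∧ ∀ f : ℝ → ℂ, ContDiffOn ℝ 1 f (Ici 0) →
      (∃ R : ℝ, ∀ x : ℝ, R ≤ x → f x = 0) →
      (∫ x in Ioi (0 : ℝ), x ^ (p * s) * ‖f x‖ ^ p) ^ (1 / p) ≤
        C * (∫ x in Ioi (0 : ℝ), x ^ (p * (s + 1)) * ‖derivWithin f (Ici 0) x‖ ^ p) ^ (1 / p) := by
  have hp0 : 0 < p := by linarith
  have hp1 : 1 / p ≤ 1 := (div_le_one hp0).mpr hp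
  obtain ⟨a, ha, has⟩ := exists_between (show 1 - 1 / p < s + 1 by linarith)
  have hK := hardyConst_pos hp ha has
  refine ⟨hardyConst p s a ^ (1 / p), Real.rpow_pos_of_pos hK _, ?_⟩
  rintro f hf ⟨R, hR⟩
  have hderiv : ∫ x in Ioi (0 : ℝ), x ^ (p * (s + 1)) * ‖derivWithin f (Ici 0) x‖ ^ p =
      ∫ x in Ioi (0 : ℝ), x ^ (p * (s + 1)) * ‖deriv f x‖ ^ p :=
    setIntegral_congr_fun measurableSet_Ioi fun x (hx : 0 < x) ↦ by
      simp only [derivWithin_of_mem_nhds (Ici_mem_nhds hx)]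
  have hint := integrableOn_Ioi_rpow_mul_norm_deriv_rpow hp0
    (mul_nonneg hp0.le (by linarith : 0 ≤ s + 1)) hf hR
  have hle := integral_rpow_mul_norm_rpow_le hp ha has (hf.mono Ioi_subset_Ici_self) hR hint
  rw [hderiv]
  calc (∫ x in Ioi (0 : ℝ), x ^ (p * s) * ‖f x‖ ^ p) ^ (1 / p)
      ≤ (hardyConst p s a * ∫ x in Ioi (0 : ℝ), x ^ (p * (s + 1)) * ‖deriv f x‖ ^ p) ^ (1 / p) :=
        Real.rpow_le_rpow (setIntegral_nonneg measurableSet_Ioi fun x (hx : 0 < x) ↦ by positivity)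
          hle (by positivity)
    _ = _ := Real.mul_rpow hK.le
        (setIntegral_nonneg measurableSet_Ioi fun x (hx : 0 < x) ↦ by positivity)
end
end

section
/- Let p ≥ 1, r > 0 and s > −1/p be real numbers. There exists a constant C > 0, depending only on p, r, s, such that for every continuously differentiable function f : [0,r] → ℂ: |f(r)| ≤ C ( (∫₀^r x^{ps} |f(x)|^p dx)^{1/p} + (∫₀^r x^{p(s+1)} |f'(x)|^p dx)^{1/p} ). -/
open MeasureTheory Metric Set

noncomputable section

/-! On `[r/2, r]` the weights `x ^ (p s)` and `x ^ (p (s + 1))` are bounded below, and for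
`w > -1` the weight `x ^ w` is integrable at `0`, so the weighted integrals over `[0, r]` bound the
`L^p` averages of `‖f‖` and `‖f'‖` over `[r/2, r]`. By the mean value theorem for integrals `‖f‖`
equals its average at some `x₀ ∈ [r/2, r]`, and `‖f r‖ ≤ ‖f x₀‖ + ∫_{r/2}^r ‖f'‖`; Jensen's
inequality bounds both `L^1` averages by the `L^p` averages. -/

open scoped Interval

section PowerMean

variable {h : ℝ → ℝ} {a b p : ℝ}

theorem interval_average_nonneg (hab : a ≤ b) (h0 : ∀ x ∈ Icc a b, 0 ≤ h x) :
    0 ≤ ⨍ x in a..b, h x := by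
  rw [interval_average_eq, smul_eq_mul]
  exact mul_nonneg (by simpa using hab) (intervalIntegral.integral_nonneg hab h0)

theorem interval_average_le_rpow_interval_average_rpow (hp : 1 ≤ p) (hab : a < b)
    (hh : ContinuousOn h (Icc a b)) (h0 : ∀ x ∈ Icc a b, 0 ≤ h x) :
    ⨍ x in a..b, h x ≤ (⨍ x in a..b, h x ^ p) ^ (1 / p) := by
  have hp0 : 0 < p := by linarith
  have hIoc : Ι a b ⊆ Icc a b := by rw [uIoc_of_le hab.le]; exact Ioc_subset_Icc_self
  have hpow : ContinuousOn (fun x => h x ^ p) (Icc a b) :=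
    hh.rpow_const fun _ _ => Or.inr hp0.le
  have jensen : (⨍ x in a..b, h x) ^ p ≤ ⨍ x in a..b, h x ^ p :=
    (convexOn_rpow hp).map_set_average_le (continuousOn_id.rpow_const fun _ _ => Or.inr hp0.le)
      isClosed_Ici (by simp [uIoc_of_le hab.le, hab]) (by simp [uIoc_of_le hab.le])
      ((ae_restrict_mem measurableSet_uIoc).mono fun x hx => h0 x (hIoc hx))
      (hh.integrableOn_Icc.mono_set hIoc) (hpow.integrableOn_Icc.mono_set hIoc)
  have havg : 0 ≤ ⨍ x in a..b, h x := interval_average_nonneg hab.le h0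
  calc ⨍ x in a..b, h x = ((⨍ x in a..b, h x) ^ p) ^ (1 / p) := by
        rw [one_div, Real.rpow_rpow_inv havg hp0.ne']
    _ ≤ _ := by gcongr

end PowerMean

section Weight

variable {a r w : ℝ}

theorem min_rpow_le_rpow_of_mem_Icc (ha : 0 < a) {x : ℝ} (hx : x ∈ Icc a r) :
    min (a ^ w) (r ^ w) ≤ x ^ w := by
  rcases le_or_gt 0 w with hw | hw
  · exact (min_le_left _ _).trans (Real.rpow_le_rpow ha.le hx.1 hw)
  · exact (min_le_right _ _).trans (Real.rpow_le_rpow_of_nonpos (ha.trans_le hx.1) hx.2 hw.le)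

theorem exists_interval_average_le_mul_integral_rpow_mul (ha : 0 < a) (har : a < r)
    (hw : -1 < w) :
    ∃ K > 0, ∀ g : ℝ → ℝ, ContinuousOn g (Icc 0 r) → (∀ x ∈ Icc 0 r, 0 ≤ g x) →
      ⨍ x in a..r, g x ≤ K * ∫ x in (0 : ℝ)..r, x ^ w * g x := by
  set m := min (a ^ w) (r ^ w)
  have hm : 0 < m := lt_min (Real.rpow_pos_of_pos ha w) (Real.rpow_pos_of_pos (ha.trans har) w)
  have hsub : Icc a r ⊆ Icc 0 r := Icc_subset_Icc ha.le le_rfl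
  refine ⟨((r - a) * m)⁻¹, inv_pos.2 (mul_pos (sub_pos.2 har) hm), fun g hg hg0 => ?_⟩
  have hweighted : ContinuousOn (fun x => x ^ w * g x) (Icc a r) :=
    (continuousOn_id.rpow_const fun x hx => Or.inl (ha.trans_le hx.1).ne').mul (hg.mono hsub)
  have hlower : m * ∫ x in a..r, g x ≤ ∫ x in a..r, x ^ w * g x := by
    rw [← intervalIntegral.integral_const_mul]
    refine intervalIntegral.integral_mono_on har.le
      ((continuousOn_const.mul (hg.mono hsub)).intervalIntegrable_of_Icc har.le)
      (hweighted.intervalIntegrable_of_Icc har.le) fun x hx => ?_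
    exact mul_le_mul_of_nonneg_right (min_rpow_le_rpow_of_mem_Icc ha hx) (hg0 x (hsub hx))
  have hextend : ∫ x in a..r, x ^ w * g x ≤ ∫ x in (0 : ℝ)..r, x ^ w * g x := by
    refine intervalIntegral.integral_mono_interval ha.le har.le le_rfl
      ((ae_restrict_mem measurableSet_Ioc).mono fun x hx =>
        mul_nonneg (Real.rpow_nonneg hx.1.le w) (hg0 x (Ioc_subset_Icc_self hx)))
      ((intervalIntegral.intervalIntegrable_rpow' hw).mul_continuousOn ?_)
    rwa [uIcc_of_le (ha.trans har).le]
  have hra : 0 < r - a := sub_pos.2 har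
  calc ⨍ x in a..r, g x = ((r - a) * m)⁻¹ * (m * ∫ x in a..r, g x) := by
        rw [interval_average_eq, smul_eq_mul]
        field_simp
    _ ≤ ((r - a) * m)⁻¹ * ∫ x in (0 : ℝ)..r, x ^ w * g x := by
        gcongr
        exact hlower.trans hextend

theorem exists_rpow_interval_average_rpow_le {p : ℝ} (hp : 0 < p) (ha : 0 < a) (har : a < r)
    (hw : -1 < w) :
    ∃ K > 0, ∀ h : ℝ → ℝ, ContinuousOn h (Icc 0 r) → (∀ x, 0 ≤ h x) →
      (⨍ x in a..r, h x ^ p) ^ (1 / p) ≤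
        K * (∫ x in (0 : ℝ)..r, x ^ w * h x ^ p) ^ (1 / p) := by
  obtain ⟨K, hK, hbound⟩ := exists_interval_average_le_mul_integral_rpow_mul ha har hw
  refine ⟨K ^ (1 / p), by positivity, fun h hh h0 => ?_⟩
  have hpow0 : ∀ x, 0 ≤ h x ^ p := fun x => Real.rpow_nonneg (h0 x) p
  have hI : 0 ≤ ∫ x in (0 : ℝ)..r, x ^ w * h x ^ p :=
    intervalIntegral.integral_nonneg (ha.trans har).le fun x hx =>
      mul_nonneg (Real.rpow_nonneg hx.1 w) (hpow0 x)
  rw [← Real.mul_rpow hK.le hI]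
  exact Real.rpow_le_rpow (interval_average_nonneg har.le fun x _ => hpow0 x)
    (hbound _ (hh.rpow_const fun _ _ => Or.inr hp.le) fun x _ => hpow0 x) (by positivity)

end Weight

theorem norm_le_norm_add_integral_norm_derivWithin {E : Type*} [NormedAddCommGroup E]
    [NormedSpace ℝ E] [CompleteSpace E] {f : ℝ → E} {a b c x : ℝ}
    (hf : ContDiffOn ℝ 1 f (Icc a b)) (hac : a ≤ c) (hx : x ∈ Icc c b) :
    ‖f b‖ ≤ ‖f x‖ + ∫ t in c..b, ‖derivWithin f (Icc a b) t‖ := by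
  rcases hx.2.eq_or_lt with rfl | hxb
  · have : 0 ≤ ∫ t in c..x, ‖derivWithin f (Icc a x) t‖ :=
      intervalIntegral.integral_nonneg hx.1 fun _ _ => norm_nonneg _
    linarith
  have hsub : Icc x b ⊆ Icc a b := Icc_subset_Icc (hac.trans hx.1) le_rfl
  have hf' : ContinuousOn (derivWithin f (Icc a b)) (Icc a b) :=
    hf.continuousOn_derivWithin (uniqueDiffOn_Icc (by linarith [hx.1])) le_rfl
  have hftc : ∫ t in x..b, derivWithin f (Icc a b) t = f b - f x := by
    refine intervalIntegral.integral_eq_sub_of_hasDeriv_right_of_le hxb.le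
      (hf.continuousOn.mono hsub) (fun t ht => ?_)
      ((hf'.mono hsub).intervalIntegrable_of_Icc hxb.le)
    have hmem : Icc a b ∈ nhds t := Icc_mem_nhds (by linarith [hx.1, ht.1]) ht.2
    exact ((hf.differentiableOn one_ne_zero t (hsub (Ioo_subset_Icc_self ht))).hasDerivWithinAt
      |>.hasDerivAt hmem).hasDerivWithinAt
  calc ‖f b‖ ≤ ‖f x‖ + ‖f b - f x‖ := norm_le_norm_add_norm_sub' _ _
    _ ≤ ‖f x‖ + ∫ t in x..b, ‖derivWithin f (Icc a b) t‖ := by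
        rw [← hftc]
        gcongr
        exact intervalIntegral.norm_integral_le_integral_norm hxb.le
    _ ≤ ‖f x‖ + ∫ t in c..b, ‖derivWithin f (Icc a b) t‖ := by
        gcongr
        exact intervalIntegral.integral_mono_interval hx.1 hxb.le le_rfl
          (Filter.Eventually.of_forall fun _ => norm_nonneg _)
          ((hf'.norm.mono (Icc_subset_Icc hac le_rfl)).intervalIntegrable_of_Icc
            (hx.1.trans hxb.le))

/-- control of the boundary term:
`|f(r)| ≤ C (‖(·)^s f‖_{L^p(0,r)} + ‖(·)^{s+1} f'‖_{L^p(0,r)})`. -/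
theorem hardy_boundary_term (p r s : ℝ) (hp : 1 ≤ p) (hr : 0 < r) (hs : -(1 / p) < s) :
    ∃ C : ℝ, 0 < C ∧ ∀ f : ℝ → ℂ, ContDiffOn ℝ 1 f (Icc 0 r) →
      ‖f r‖ ≤ C * ((∫ x in (0 : ℝ)..r, x ^ (p * s) * ‖f x‖ ^ p) ^ (1 / p) +
        (∫ x in (0 : ℝ)..r, x ^ (p * (s + 1)) * ‖derivWithin f (Icc 0 r) x‖ ^ p) ^ (1 / p)) := by
  have hp0 : 0 < p := by linarith
  have hw₀ : -1 < p * s := by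
    linarith [mul_lt_mul_of_pos_left hs hp0, mul_one_div_cancel hp0.ne']
  have hw₁ : -1 < p * (s + 1) := by linarith
  have ha : 0 < r / 2 := by positivity
  have har : r / 2 < r := by linarith
  obtain ⟨K₀, hK₀, hbound₀⟩ := exists_rpow_interval_average_rpow_le hp0 ha har hw₀
  obtain ⟨K₁, hK₁, hbound₁⟩ := exists_rpow_interval_average_rpow_le hp0 ha har hw₁
  refine ⟨K₀ + r / 2 * K₁, by positivity, fun f hf => ?_⟩
  set f' := derivWithin f (Icc 0 r)
  have hsub : Icc (r / 2) r ⊆ Icc 0 r := Icc_subset_Icc ha.le le_rfl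
  have hfc : ContinuousOn (fun x => ‖f x‖) (Icc 0 r) := hf.continuousOn.norm
  have hf'c : ContinuousOn (fun x => ‖f' x‖) (Icc 0 r) :=
    (hf.continuousOn_derivWithin (uniqueDiffOn_Icc hr) le_rfl).norm
  obtain ⟨x₀, hx₀, hfx₀⟩ := exists_eq_interval_average (f := fun x => ‖f x‖) har.ne
    (by rw [uIcc_of_le har.le]; exact hfc.mono hsub)
  rw [uIoo_of_le har.le] at hx₀
  set I₀ := ∫ x in (0 : ℝ)..r, x ^ (p * s) * ‖f x‖ ^ p
  set I₁ := ∫ x in (0 : ℝ)..r, x ^ (p * (s + 1)) * ‖f' x‖ ^ p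
  have hI₀ : 0 ≤ I₀ := intervalIntegral.integral_nonneg hr.le fun x hx =>
    mul_nonneg (Real.rpow_nonneg hx.1 _) (by positivity)
  have hI₁ : 0 ≤ I₁ := intervalIntegral.integral_nonneg hr.le fun x hx =>
    mul_nonneg (Real.rpow_nonneg hx.1 _) (by positivity)
  calc ‖f r‖ ≤ ‖f x₀‖ + ∫ t in r / 2..r, ‖f' t‖ :=
        norm_le_norm_add_integral_norm_derivWithin hf ha.le (Ioo_subset_Icc_self hx₀)
    _ = (⨍ t in r / 2..r, ‖f t‖) + r / 2 * ⨍ t in r / 2..r, ‖f' t‖ := by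
        rw [hfx₀, interval_average_eq (fun t => ‖f' t‖), smul_eq_mul, ← mul_assoc,
          show r - r / 2 = r / 2 by ring, mul_inv_cancel₀ ha.ne', one_mul]
    _ ≤ (⨍ t in r / 2..r, ‖f t‖ ^ p) ^ (1 / p) +
          r / 2 * (⨍ t in r / 2..r, ‖f' t‖ ^ p) ^ (1 / p) := by
        gcongr
        · exact interval_average_le_rpow_interval_average_rpow hp har (hfc.mono hsub)
            fun _ _ => norm_nonneg _
        · exact interval_average_le_rpow_interval_average_rpow hp har (hf'c.mono hsub)
            fun _ _ => norm_nonneg _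
    _ ≤ K₀ * I₀ ^ (1 / p) + r / 2 * (K₁ * I₁ ^ (1 / p)) := by
        gcongr
        exacts [hbound₀ _ hfc fun _ => norm_nonneg _, hbound₁ _ hf'c fun _ => norm_nonneg _]
    _ ≤ (K₀ + r / 2 * K₁) * (I₀ ^ (1 / p) + I₁ ^ (1 / p)) := by
        nlinarith [mul_nonneg hK₀.le (Real.rpow_nonneg hI₁ (1 / p)),
          mul_nonneg (mul_nonneg ha.le hK₁.le) (Real.rpow_nonneg hI₀ (1 / p))]
end
end

section
/- Let p ≥ 1 and s > −1/p be real numbers and let f : [0,r] → ℂ be continuously differentiable. Then for every x ∈ (0,r] at which f(x) ≠ 0, the pointwise differential inequality x^{ps} |f(x)|^p ≤ d/dx ( (p/(ps+1)) x^{ps+1} |f(x)|^p ) + (p/(ps+1))^p x^{p(s+1)} |f'(x)|^p holds. -/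
open MeasureTheory Metric Set

noncomputable section

/-!
Write `N = ‖f‖`, `q = ps + 1` and `c = p/q`. The product rule and `cq = p` give
`(c x^q N^p)' = p x^{ps} N^p + c p x^q N^{p-1} N'`, and `|N'| ≤ ‖f'‖`. So the inequality
reduces to `c p x^q N^{p-1} |N'| ≤ (p-1) x^{ps} N^p + (c x^{s+1} |N'|)^p`, which is the
tangent-line inequality `p u^{p-1} v ≤ (p-1) u^p + v^p` of the convex function `t ↦ t^p`,
taken at `u = x^s N` and `v = c x^{s+1} |N'|`.
-/

open scoped InnerProductSpace

theorem HasDerivWithinAt.norm_of_ne_zero {E : Type*} [NormedAddCommGroup E]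
    [InnerProductSpace ℝ E] {f : ℝ → E} {f' : E} {s : Set ℝ} {x : ℝ}
    (hf : HasDerivWithinAt f f' s x) (h0 : f x ≠ 0) :
    HasDerivWithinAt (fun y => ‖f y‖) (⟪f x, f'⟫_ℝ / ‖f x‖) s x := by
  have h := hf.norm_sq.sqrt (by positivity)
  simp only [Real.sqrt_sq (norm_nonneg _)] at h
  convert h using 1
  ring

theorem abs_real_inner_div_norm_le {E : Type*} [NormedAddCommGroup E]
    [InnerProductSpace ℝ E] (a b : E) : |⟪a, b⟫_ℝ / ‖a‖| ≤ ‖b‖ := by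
  rcases eq_or_ne a 0 with rfl | ha
  · simp
  rw [abs_div, abs_norm, div_le_iff₀ (norm_pos_iff.2 ha), mul_comm]
  exact abs_real_inner_le_norm a b

-- Weighted AM-GM with weights `(p-1)/p` and `1/p` applied to `u^p` and `v^p`.
theorem mul_rpow_sub_one_mul_le_add_rpow {p u v : ℝ} (hp : 1 ≤ p) (hu : 0 ≤ u)
    (hv : 0 ≤ v) :
    p * (u ^ (p - 1) * v) ≤ (p - 1) * u ^ p + v ^ p := by
  have hp0 : 0 < p := zero_lt_one.trans_le hp
  have amgm := Real.geom_mean_le_arith_mean2_weighted (w₁ := (p - 1) / p) (w₂ := 1 / p)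
    (by have := sub_nonneg.2 hp; positivity) (by positivity) (Real.rpow_nonneg hu p)
    (Real.rpow_nonneg hv p) (by field_simp; ring)
  rw [← Real.rpow_mul hu, ← Real.rpow_mul hv, mul_div_cancel₀ _ hp0.ne',
    mul_one_div_cancel hp0.ne', Real.rpow_one] at amgm
  calc p * (u ^ (p - 1) * v) ≤ p * ((p - 1) / p * u ^ p + 1 / p * v ^ p) := by gcongr
    _ = (p - 1) * u ^ p + v ^ p := by field_simp

theorem hardy_pointwise_of_hasDerivWithinAt {p s x g' : ℝ} {g : ℝ → ℝ} {t : Set ℝ}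
    (hp : 1 ≤ p) (hs : 0 < p * s + 1) (hx : 0 < x) (hg : HasDerivWithinAt g g' t x)
    (hg0 : 0 ≤ g x) (ht : UniqueDiffWithinAt ℝ t x) :
    x ^ (p * s) * g x ^ p ≤
      derivWithin (fun y => (p / (p * s + 1)) * y ^ (p * s + 1) * g y ^ p) t x +
        (p / (p * s + 1)) ^ p * x ^ (p * (s + 1)) * |g'| ^ p := by
  set q := p * s + 1 with hq
  set c := p / q
  have hc : 0 ≤ c := by positivity
  have hF : HasDerivWithinAt (fun y => c * y ^ q * g y ^ p)
      (c * (q * x ^ (q - 1)) * g x ^ p + c * x ^ q * (g' * p * g x ^ (p - 1))) t x :=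
    ((Real.hasDerivAt_rpow_const (.inl hx.ne')).const_mul c).hasDerivWithinAt.mul
      (hg.rpow_const (.inr hp))
  rw [hF.derivWithin ht, add_sub_cancel_right, ← mul_assoc c, div_mul_cancel₀ _ hs.ne']
  have young := mul_rpow_sub_one_mul_le_add_rpow hp (u := x ^ s * g x)
    (v := c * x ^ (s + 1) * |g'|) (by positivity) (by positivity)
  have hu : (x ^ s * g x) ^ p = x ^ (p * s) * g x ^ p := by
    rw [Real.mul_rpow (by positivity) hg0, ← Real.rpow_mul hx.le, mul_comm s]
  have hv : (c * x ^ (s + 1) * |g'|) ^ p = c ^ p * x ^ (p * (s + 1)) * |g'| ^ p := by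
    rw [Real.mul_rpow (by positivity) (abs_nonneg _), Real.mul_rpow hc (by positivity),
      ← Real.rpow_mul hx.le, mul_comm (s + 1)]
  have huv : (x ^ s * g x) ^ (p - 1) * (c * x ^ (s + 1) * |g'|)
      = c * x ^ q * g x ^ (p - 1) * |g'| := by
    have hxq : x ^ (s * (p - 1)) * x ^ (s + 1) = x ^ q := by
      rw [← Real.rpow_add hx, hq]; ring_nf
    rw [Real.mul_rpow (by positivity) hg0, ← Real.rpow_mul hx.le]
    linear_combination (c * g x ^ (p - 1) * |g'|) * hxq
  rw [hu, hv, huv] at young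
  have hcross : -(p * (c * x ^ q * g x ^ (p - 1) * |g'|)) ≤
      c * x ^ q * (g' * p * g x ^ (p - 1)) := by
    have hcoeff : 0 ≤ p * (c * x ^ q * g x ^ (p - 1)) := by positivity
    nlinarith [neg_abs_le g']
  linarith

/-- the pointwise differential inequality
`x^{ps} |f(x)|^p ≤ d/dx ((p/(ps+1)) x^{ps+1} |f(x)|^p) + (p/(ps+1))^p x^{p(s+1)} |f'(x)|^p`
at every `x ∈ (0,r]` where `f(x) ≠ 0`. -/
theorem hardy_pointwise_differential_inequality (p r s : ℝ) (hp : 1 ≤ p) (hr : 0 < r)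
    (hs : -(1 / p) < s) (f : ℝ → ℂ) (hf : ContDiffOn ℝ 1 f (Icc 0 r))
    (x : ℝ) (hx : x ∈ Ioc (0 : ℝ) r) (hfx : f x ≠ 0) :
    x ^ (p * s) * ‖f x‖ ^ p ≤
      derivWithin (fun y => (p / (p * s + 1)) * y ^ (p * s + 1) * ‖f y‖ ^ p) (Icc 0 r) x +
        (p / (p * s + 1)) ^ p * x ^ (p * (s + 1)) * ‖derivWithin f (Icc 0 r) x‖ ^ p := by
  obtain ⟨hx0, hxr⟩ := hx
  have hxI : x ∈ Icc 0 r := ⟨hx0.le, hxr⟩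
  have hq : 0 < p * s + 1 := by
    have := mul_lt_mul_of_pos_left hs (zero_lt_one.trans_le hp)
    rw [mul_neg, mul_one_div_cancel (by linarith)] at this
    linarith
  have hf' : HasDerivWithinAt f (derivWithin f (Icc 0 r) x) (Icc 0 r) x :=
    (hf.differentiableOn one_ne_zero x hxI).hasDerivWithinAt
  calc _ ≤ _ := hardy_pointwise_of_hasDerivWithinAt hp hq hx0 (hf'.norm_of_ne_zero hfx)
        (norm_nonneg _) (uniqueDiffOn_Icc hr x hxI)
    _ ≤ _ := by gcongr; exact abs_real_inner_div_norm_le _ _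
end
end
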